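/- Let Y be a finite set and A ∈ DCCone(Y) nonempty. Then I(A) = 0 if and only if hull(A) ≠ ℝ^Y, where hull(A) denotes the set of all finite convex combinations of elements of A. -/

import Mathlib

open scoped BigOperators

noncomputable section

/-- `A ⊆ ℝ^Y` is a pricing downward closed (DC) cone. -/
def IsDCCone {Y : Type*} (A : Set (Y → ℝ)) : Prop :=
  (∀ a ∈ A, ∀ γ : ℝ, 0 ≤ γ → γ • a ∈ A) ∧
  (∀ a ∈ A, ∀ b : Y → ℝ, (∀ y, 0 ≤ b y) → a - b ∈ A)

/-- Probability mass functions on a finite set `Y`. -/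
def probSimplex (Y : Type*) [Fintype Y] : Set (Y → ℝ) :=
  {p | (∀ y, 0 ≤ p y) ∧ ∑ y, p y = 1}

/-- KL divergence in bits, valued in the extended reals. -/
def KLdiv {Y : Type*} [Fintype Y] (p q : Y → ℝ) : EReal :=
  if ∀ y, q y = 0 → p y = 0 then
    (((∑ y, if p y = 0 then 0 else p y * Real.logb 2 (p y / q y)) : ℝ) : EReal)
  else ⊤

/-- Information capacity `I(A)` of a pricing DC cone `A`.  The conventions
`I(∅) = -∞` and `I(ℝ^Y) = +∞` follow from `⨆ (empty) = ⊥` and `⨅ (empty) = ⊤`. -/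
def infoCap {Y : Type*} [Fintype Y] (A : Set (Y → ℝ)) : EReal :=
  ⨅ q ∈ probSimplex Y, ⨆ a ∈ A,
    ⨅ p ∈ {p ∈ probSimplex Y | ∑ y, p y * a y ≤ 0}, KLdiv p q

/-! If `hull A ≠ ℝ^Y`, then `hull A`, itself a convex DC cone, misses the open positive orthant,
and a separating hyperplane gives a pmf `q` with `⟨q, a⟩ ≤ 0` on `A`; taking `p = q` shows
`I(A) ≤ 0`, while `I(A) ≥ 0` by Gibbs' inequality since `0 ∈ A`.

Conversely, if `hull A = ℝ^Y`, then `1` is a convex combination of finitely many `a ∈ A`, all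
bounded by some `M`, so every `q` has `⟨q, a⟩ ≥ 1` for one of them. The variational bound
`D(p‖q) ≥ ⟨p, f⟩ + 1 - ⟨q, e^f⟩` (in nats) with `f = -a / 2M²`, together with
`e^x ≤ 1 + x + x²` for `|x| ≤ 1`, gives `D(p‖q) ≥ 1 / 4M²` whenever `⟨p, a⟩ ≤ 0`, so
`I(A) ≥ 1 / 4M² > 0`. -/

open Finset
open scoped Pointwise

namespace IsDCCone

variable {Y : Type*} {C : Set (Y → ℝ)}

lemma zero_mem (hC : IsDCCone C) (hne : C.Nonempty) : (0 : Y → ℝ) ∈ C := by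
  obtain ⟨a, ha⟩ := hne
  simpa using hC.1 a ha 0 le_rfl

protected lemma convexHull (hC : IsDCCone C) : IsDCCone (convexHull ℝ C) := by
  refine ⟨fun x hx γ hγ => ?_, fun x hx b hb => ?_⟩
  · have hsub : γ • C ⊆ C := Set.smul_set_subset_iff.2 fun a ha => hC.1 a ha γ hγ
    refine convexHull_mono hsub ?_
    rw [convexHull_smul]
    exact Set.smul_mem_smul_set hx
  · have hsub : -b +ᵥ C ⊆ C := Set.vadd_set_subset_iff.2 fun a ha => by
      simpa [neg_add_eq_sub] using hC.2 a ha b hb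
    refine convexHull_mono hsub ?_
    rw [convexHull_vadd]
    simpa [neg_add_eq_sub] using Set.vadd_mem_vadd_set (a := -b) hx

variable [Fintype Y]

lemma eq_univ_of_mem_of_forall_pos (hC : IsDCCone C) {x : Y → ℝ} (hx : x ∈ C)
    (hpos : ∀ y, 0 < x y) : C = Set.univ := by
  refine Set.eq_univ_of_forall fun z => ?_
  have hterm : ∀ y, 0 ≤ |z y| / x y := fun y => div_nonneg (abs_nonneg _) (hpos y).le
  set γ := ∑ y, |z y| / x y
  have hz : ∀ y, z y ≤ γ * x y := fun y => by
    have := single_le_sum (fun y _ => hterm y) (mem_univ y)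
    rw [div_le_iff₀ (hpos y)] at this
    linarith [le_abs_self (z y)]
  have := hC.2 _ (hC.1 x hx γ (sum_nonneg fun y _ => hterm y)) (γ • x - z)
    fun y => by simpa using hz y
  simpa using this

end IsDCCone

lemma sub_le_mul_log_div {x r : ℝ} (hx : 0 ≤ x) (hr : 0 ≤ r) (hxr : r = 0 → x = 0) :
    x - r ≤ x * Real.log (x / r) := by
  obtain rfl | hx := hx.eq_or_lt
  · simpa using hr
  have hr : 0 < r := hr.lt_of_ne fun h => hx.ne' (hxr h.symm)
  calc x - r = x * (1 - (x / r)⁻¹) := by field_simp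
    _ ≤ x * Real.log (x / r) := by gcongr; exact Real.one_sub_inv_le_log_of_pos (by positivity)

section

variable {Y : Type*} [Fintype Y]

/-- A linearised Donsker–Varadhan inequality. -/
theorem le_sum_mul_log_div {p q : Y → ℝ} (hp : ∀ y, 0 ≤ p y) (hq : ∀ y, 0 ≤ q y)
    (hpq : ∀ y, q y = 0 → p y = 0) (f : Y → ℝ) :
    ∑ y, p y * f y + ∑ y, p y - ∑ y, q y * Real.exp (f y)
      ≤ ∑ y, p y * Real.log (p y / q y) := by
  rw [← sum_add_distrib, ← sum_sub_distrib]
  refine sum_le_sum fun y _ => ?_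
  have key := sub_le_mul_log_div (hp y) (mul_nonneg (hq y) (Real.exp_pos (f y)).le)
    fun h => hpq y <| by simpa [(Real.exp_pos _).ne'] using h
  obtain hpy | hpy := eq_or_ne (p y) 0
  · simpa [hpy] using key
  have hqy : q y ≠ 0 := fun h => hpy (hpq y h)
  rw [← div_div, Real.log_div (div_ne_zero hpy hqy) (Real.exp_pos _).ne', Real.log_exp] at key
  linarith

lemma KLdiv_eq_of_support_subset {p q : Y → ℝ} (hpq : ∀ y, q y = 0 → p y = 0) :
    KLdiv p q = ((∑ y, p y * Real.log (p y / q y)) / Real.log 2 : ℝ) := by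
  rw [KLdiv, if_pos hpq, sum_div]
  congr 2 with y
  split_ifs with h
  · simp [h]
  · rw [Real.logb, mul_div_assoc]

lemma KLdiv_nonneg {p q : Y → ℝ} (hp : p ∈ probSimplex Y) (hq : q ∈ probSimplex Y) :
    0 ≤ KLdiv p q := by
  by_cases hpq : ∀ y, q y = 0 → p y = 0
  · have hgibbs := le_sum_mul_log_div hp.1 hq.1 hpq 0
    simp only [Pi.zero_apply, mul_zero, sum_const_zero, Real.exp_zero, mul_one, hp.2, hq.2]
      at hgibbs
    rw [KLdiv_eq_of_support_subset hpq]
    exact EReal.coe_nonneg.2 (div_nonneg (by linarith) (Real.log_nonneg one_le_two))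
  · rw [KLdiv, if_neg hpq]
    exact le_top

lemma KLdiv_self (q : Y → ℝ) : KLdiv q q = 0 := by
  rw [KLdiv_eq_of_support_subset fun _ h => h]
  norm_cast
  refine div_eq_zero_iff.2 (Or.inl (sum_eq_zero fun y _ => ?_))
  obtain h | h := eq_or_ne (q y) 0 <;> simp [h]

lemma sum_mul_exp_neg_le {q a : Y → ℝ} {M : ℝ} (hq : q ∈ probSimplex Y) (ha : ∀ y, |a y| ≤ M)
    (hqa : 1 ≤ ∑ y, q y * a y) :
    ∑ y, q y * Real.exp (-(a y / (2 * M ^ 2))) ≤ 1 - 1 / (4 * M ^ 2) := by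
  have hM : 1 ≤ M := hqa.trans <| by
    calc ∑ y, q y * a y ≤ ∑ y, q y * M :=
          sum_le_sum fun y _ => mul_le_mul_of_nonneg_left ((le_abs_self _).trans (ha y)) (hq.1 y)
      _ = M := by rw [← sum_mul, hq.2, one_mul]
  have hM0 : 0 < M := one_pos.trans_le hM
  have hexp : ∀ y, Real.exp (-(a y / (2 * M ^ 2))) ≤ 1 - a y / (2 * M ^ 2) + 1 / (4 * M ^ 2) := by
    intro y
    have hx : |a y / (2 * M ^ 2)| ≤ 1 / (2 * M) := by
      rw [abs_div, abs_of_pos (show (0 : ℝ) < 2 * M ^ 2 by positivity)]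
      calc |a y| / (2 * M ^ 2) ≤ M / (2 * M ^ 2) := by gcongr; exact ha y
        _ = 1 / (2 * M) := by field_simp
    have hx1 : |(-(a y / (2 * M ^ 2)))| ≤ 1 := by
      rw [abs_neg]
      exact hx.trans ((div_le_one (by positivity)).2 (by linarith))
    have hsq : (a y / (2 * M ^ 2)) ^ 2 ≤ 1 / (4 * M ^ 2) := by
      rw [← sq_abs]
      calc |a y / (2 * M ^ 2)| ^ 2 ≤ (1 / (2 * M)) ^ 2 := by gcongr
        _ = 1 / (4 * M ^ 2) := by ring
    have := (abs_le.1 (Real.abs_exp_sub_one_sub_id_le hx1)).2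
    rw [neg_sq] at this
    linarith
  calc ∑ y, q y * Real.exp (-(a y / (2 * M ^ 2)))
      ≤ ∑ y, q y * (1 - a y / (2 * M ^ 2) + 1 / (4 * M ^ 2)) :=
        sum_le_sum fun y _ => mul_le_mul_of_nonneg_left (hexp y) (hq.1 y)
    _ = 1 - (∑ y, q y * a y) / (2 * M ^ 2) + 1 / (4 * M ^ 2) := by
        simp only [mul_add, mul_sub, mul_one, sum_add_distrib, sum_sub_distrib, ← sum_mul,
          hq.2, sum_div, mul_div_assoc]
        ring
    _ ≤ 1 - 1 / (4 * M ^ 2) := by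
        have : 1 / (2 * M ^ 2) ≤ (∑ y, q y * a y) / (2 * M ^ 2) := by gcongr
        have h2 : 1 / (2 * M ^ 2) = 2 * (1 / (4 * M ^ 2)) := by field_simp; ring
        linarith

theorem le_KLdiv_of_sum_mul_nonpos {p q a : Y → ℝ} {M : ℝ} (hp : p ∈ probSimplex Y)
    (hq : q ∈ probSimplex Y) (ha : ∀ y, |a y| ≤ M) (hqa : 1 ≤ ∑ y, q y * a y)
    (hpa : ∑ y, p y * a y ≤ 0) : ((1 / (4 * M ^ 2) : ℝ) : EReal) ≤ KLdiv p q := by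
  by_cases hpq : ∀ y, q y = 0 → p y = 0
  swap
  · rw [KLdiv, if_neg hpq]
    exact le_top
  have hDV := le_sum_mul_log_div hp.1 hq.1 hpq fun y => -(a y / (2 * M ^ 2))
  have hZ := sum_mul_exp_neg_le hq ha hqa
  have hpf : 0 ≤ ∑ y, p y * -(a y / (2 * M ^ 2)) := by
    simp only [mul_neg, sum_neg_distrib, ← mul_div_assoc, ← sum_div, neg_nonneg]
    exact div_nonpos_of_nonpos_of_nonneg hpa (by positivity)
  rw [hp.2] at hDV
  rw [KLdiv_eq_of_support_subset hpq, EReal.coe_le_coe_iff]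
  refine le_trans ?_ (le_div_self ?_ (Real.log_pos one_lt_two) ?_)
  · linarith
  · linarith [show 0 ≤ 1 / (4 * M ^ 2) by positivity]
  · linarith [Real.log_two_lt_d9]

theorem IsDCCone.exists_mem_probSimplex_forall_sum_mul_nonpos {C : Set (Y → ℝ)}
    (hC : IsDCCone C) (hconv : Convex ℝ C) (h0 : (0 : Y → ℝ) ∈ C) (huniv : C ≠ Set.univ) :
    ∃ q ∈ probSimplex Y, ∀ a ∈ C, ∑ y, q y * a y ≤ 0 := by
  classical
  have hdisj : Disjoint (Set.univ.pi fun _ : Y => Set.Ioi (0 : ℝ)) C :=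
    Set.disjoint_left.2 fun x hxU hxC =>
      huniv (hC.eq_univ_of_mem_of_forall_pos hxC fun y => hxU y trivial)
  obtain ⟨f, u, hfU, hfC⟩ := geometric_hahn_banach_open
    (convex_pi fun _ _ => convex_Ioi 0) (isOpen_set_pi Set.finite_univ fun _ _ => isOpen_Ioi)
    hconv hdisj
  have hu : u ≤ 0 := by simpa using hfC 0 h0
  have hfC' : ∀ a ∈ C, 0 ≤ f a := by
    intro a ha
    by_contra! hfa
    have hγ : 0 ≤ u / f a + 1 := add_nonneg (div_nonneg_of_nonpos hu hfa.le) zero_le_one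
    have := hfC _ (hC.1 a ha _ hγ)
    rw [map_smul, smul_eq_mul, add_mul, div_mul_cancel₀ _ hfa.ne, one_mul] at this
    linarith
  set w : Y → ℝ := fun y => -f fun j => if y = j then 1 else 0
  have hfw : ∀ x, f x = -∑ y, w y * x y := fun x => by
    simpa [w, mul_comm] using LinearMap.pi_apply_eq_sum_univ f.toLinearMap x
  have hw : ∀ y, 0 ≤ w y := fun y => by
    have := hfC' _ (hC.2 0 h0 (fun j => if y = j then 1 else 0) fun j => by split_ifs <;> norm_num)
    simpa [w] using this
  have hw1 : 0 < ∑ y, w y := by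
    have := hfU 1 fun _ _ => show (0 : ℝ) < 1 from one_pos
    simp only [hfw, Pi.one_apply, mul_one] at this
    linarith
  refine ⟨fun y => w y / ∑ y, w y, ⟨fun y => div_nonneg (hw y) hw1.le, ?_⟩, fun a ha => ?_⟩
  · rw [← sum_div, div_self hw1.ne']
  · have := hfC' a ha
    rw [hfw] at this
    simp only [div_mul_eq_mul_div, ← sum_div]
    exact div_nonpos_of_nonpos_of_nonneg (by linarith) hw1.le

theorem exists_forall_one_le_sum_mul_of_one_mem_convexHull {A : Set (Y → ℝ)}
    (h : (1 : Y → ℝ) ∈ convexHull ℝ A) :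
    ∃ M > 0, ∀ q ∈ probSimplex Y, ∃ a ∈ A, (∀ y, |a y| ≤ M) ∧ 1 ≤ ∑ y, q y * a y := by
  obtain ⟨S, hSA, hS⟩ : ∃ S : Finset (Y → ℝ), ↑S ⊆ A ∧ (1 : Y → ℝ) ∈ convexHull ℝ (S : Set _) := by
    simpa [convexHull_eq_union_convexHull_finite_subsets A] using h
  refine ⟨∑ a ∈ S, ‖a‖ + 1, by positivity, fun q hq => ?_⟩
  let ℓ : (Y → ℝ) →ₗ[ℝ] ℝ := Fintype.linearCombination ℝ q
  obtain ⟨a, haS, ha⟩ := (ℓ.convexOn convex_univ).exists_ge_of_mem_convexHull (Set.subset_univ _) hS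
  refine ⟨a, hSA haS, fun y => ?_, ?_⟩
  · calc |a y| ≤ ‖a‖ := norm_le_pi_norm a y
      _ ≤ ∑ b ∈ S, ‖b‖ := single_le_sum (fun b _ => norm_nonneg b) haS
      _ ≤ _ := le_add_of_nonneg_right zero_le_one
  · simpa [ℓ, Fintype.linearCombination_apply, hq.2, mul_comm] using ha

lemma le_infoCap {A : Set (Y → ℝ)} {c : EReal}
    (h : ∀ q ∈ probSimplex Y, ∃ a ∈ A, ∀ p ∈ probSimplex Y, ∑ y, p y * a y ≤ 0 → c ≤ KLdiv p q) :
    c ≤ infoCap A := by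
  refine le_iInf₂ fun q hq => ?_
  obtain ⟨a, ha, hc⟩ := h q hq
  exact le_iSup₂_of_le a ha (le_iInf₂ fun p hp => hc p hp.1 hp.2)

lemma infoCap_nonneg {A : Set (Y → ℝ)} (h0 : (0 : Y → ℝ) ∈ A) : 0 ≤ infoCap A :=
  le_infoCap fun _ hq => ⟨0, h0, fun _ hp _ => KLdiv_nonneg hp hq⟩

lemma infoCap_nonpos {A : Set (Y → ℝ)} {q : Y → ℝ} (hq : q ∈ probSimplex Y)
    (hqA : ∀ a ∈ A, ∑ y, q y * a y ≤ 0) : infoCap A ≤ 0 :=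
  iInf₂_le_of_le q hq <| iSup₂_le fun a ha => iInf₂_le_of_le q ⟨hq, hqA a ha⟩ (KLdiv_self q).le

theorem infoCap_pos_of_convexHull_eq_univ {A : Set (Y → ℝ)} (h : convexHull ℝ A = Set.univ) :
    0 < infoCap A := by
  obtain ⟨M, hM, hbound⟩ := exists_forall_one_le_sum_mul_of_one_mem_convexHull (h ▸ Set.mem_univ 1)
  refine (EReal.coe_pos.2 (by positivity : (0 : ℝ) < 1 / (4 * M ^ 2))).trans_le
    (le_infoCap fun q hq => ?_)
  obtain ⟨a, ha, haM, hqa⟩ := hbound q hq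
  exact ⟨a, ha, fun p hp hpa => le_KLdiv_of_sum_mul_nonpos hp hq haM hqa hpa⟩

end

/-- For a nonempty pricing DC cone `A` over a finite set `Y`, `I(A) = 0` iff the convex
hull of `A` is not all of `ℝ^Y` (i.e. `A` is non-informative). -/
theorem infoCap_eq_zero_iff {Y : Type*} [Fintype Y]
    (A : Set (Y → ℝ)) (hA : IsDCCone A) (hne : A.Nonempty) :
    infoCap A = 0 ↔ convexHull ℝ A ≠ Set.univ := by
  refine ⟨fun h hA1 => (infoCap_pos_of_convexHull_eq_univ hA1).ne' h, fun h => ?_⟩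
  have h0 := hA.zero_mem hne
  obtain ⟨q, hq, hqA⟩ := hA.convexHull.exists_mem_probSimplex_forall_sum_mul_nonpos
    (convex_convexHull ℝ A) (subset_convexHull ℝ A h0) h
  exact le_antisymm (infoCap_nonpos hq fun a ha => hqA a (subset_convexHull ℝ A ha))
    (infoCap_nonneg h0)

end
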